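/- arXiv:1704.02887 — 4 statements merged into one kernel-verified Lean document; each statement's English description precedes it below -/
import Mathlib

section
/- For every t > 0 and every β ∈ ℝ, the value of Jacobi's third theta function on the imaginary axis, ϑ₃(β; it) = ∑_{k∈ℤ} exp(−π k² t + 2πi k β), is a strictly positive real number. -/
/-!
Poisson summation turns the theta series into `t^(-1/2) ∑ₙ exp(-π (n - β)² / t)`, a convergent
series of positive reals.
-/

open scoped Real
open Complex

lemma summable_exp_neg_mul_int_sub_sq {a : ℝ} (ha : 0 < a) (β : ℝ) :
    Summable fun n : ℤ => Real.exp (-a * ((n : ℝ) - β) ^ 2) := by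
  refine (HurwitzKernelBounds.summable_f_int 0 (-β) (div_pos ha Real.pi_pos)).congr fun n => ?_
  rw [HurwitzKernelBounds.f_int, pow_zero, one_mul]
  congr 1
  field_simp
  ring

lemma tsum_exp_neg_mul_int_sub_sq_pos {a : ℝ} (ha : 0 < a) (β : ℝ) :
    0 < ∑' n : ℤ, Real.exp (-a * ((n : ℝ) - β) ^ 2) :=
  (summable_exp_neg_mul_int_sub_sq ha β).tsum_pos (fun _ => (Real.exp_pos _).le) 0
    (Real.exp_pos _)

lemma tsum_exp_neg_int_sq_mul_add_eq_ofReal {t : ℝ} (ht : 0 < t) (β : ℝ) :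
    ∑' k : ℤ, cexp (-π * k ^ 2 * t + 2 * π * I * k * β) =
      ((1 / t ^ (1 / 2 : ℝ) * ∑' n : ℤ, Real.exp (-(π / t) * ((n : ℝ) - β) ^ 2) : ℝ) : ℂ) := by
  have hre : 0 < (t : ℂ).re := by rwa [ofReal_re]
  calc ∑' k : ℤ, cexp (-π * k ^ 2 * t + 2 * π * I * k * β)
      = ∑' k : ℤ, cexp (-π * t * k ^ 2 + 2 * π * (I * β) * k) := by
        congr 1 with k; ring_nf
    _ = 1 / (t : ℂ) ^ (1 / 2 : ℂ) * ∑' n : ℤ, cexp (-π / t * (n + I * (I * β)) ^ 2) :=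
        tsum_exp_neg_quadratic hre _
    _ = _ := by
        have hcpow : (t : ℂ) ^ (1 / 2 : ℂ) = ((t ^ (1 / 2 : ℝ) : ℝ) : ℂ) := by
          rw [ofReal_cpow ht.le]; push_cast; rfl
        have hterm (n : ℤ) : cexp (-π / t * (n + I * (I * β)) ^ 2) =
            (Real.exp (-(π / t) * ((n : ℝ) - β) ^ 2) : ℂ) := by
          rw [← mul_assoc, I_mul_I]; push_cast; ring_nf
        simp_rw [hcpow, hterm, ← ofReal_tsum]
        push_cast; rfl

/-- Jacobi's third theta function on the imaginary axis,
`ϑ₃(β; it) = ∑_{k∈ℤ} exp(−π k² t + 2πi k β)`, is a strictly positive real number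
for every `t > 0` and `β ∈ ℝ`. -/
theorem jacobiTheta3_im_axis_pos_real (t β : ℝ) (ht : 0 < t) :
    (∑' k : ℤ, Complex.exp (-(π : ℂ) * (k : ℂ) ^ 2 * (t : ℂ) +
      2 * (π : ℂ) * Complex.I * (k : ℂ) * (β : ℂ))).im = 0 ∧
    0 < (∑' k : ℤ, Complex.exp (-(π : ℂ) * (k : ℂ) ^ 2 * (t : ℂ) +
      2 * (π : ℂ) * Complex.I * (k : ℂ) * (β : ℂ))).re := by
  rw [tsum_exp_neg_int_sq_mul_add_eq_ofReal ht, ofReal_im, ofReal_re]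
  exact ⟨rfl, mul_pos (one_div_pos.mpr (Real.rpow_pos_of_pos ht _))
    (tsum_exp_neg_mul_int_sub_sq_pos (div_pos Real.pi_pos ht) β)⟩
end

section
/- For every fixed t > 0, the function β ↦ ϑ₃(β; it) is real-valued and strictly decreasing on the interval [0, 1/2]: if 0 ≤ β₁ < β₂ ≤ 1/2, then ϑ₃(β₂; it) < ϑ₃(β₁; it). -/
/-!
For `t > 1/4` the Fourier series is dominated by its first harmonic. With `q = e^{-πt}`,
`ϑ(β₁) - ϑ(β₂) = 4 ∑_{n ≥ 1} q^{n²} sin(nσ) sin(nδ)`, where `σ = π(β₁ + β₂)` and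
`δ = π(β₂ - β₁)` lie in `(0, π)`, and `|sin nx| ≤ n |sin x|` lets the `n = 1` term win
as soon as `q < 1/2`.

For `t ≤ 1/4`, Poisson summation turns `ϑ(β)` into `t^{-1/2} ∑ₖ exp(-c (β + k)²)` with
`c = π/t ≥ 4π`. Near `β = 0` the drop of the central Gaussian beats the second-order growth of
the symmetric pairs `exp(-c (k - β)²) + exp(-c (k + β)²)`; away from `0` one pairs `β + n`
with `n + 1 - β` and uses that the Gaussian is convex past its inflection point `1/√(2c)`.
-/

open scoped Real
open Complex

lemma sq_le_four_pow (n : ℕ) : ((n : ℝ) + 1) ^ 2 ≤ 4 ^ n := by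
  have h : (n : ℝ) + 1 ≤ 2 ^ n := by exact_mod_cast Nat.lt_two_pow_self
  calc ((n : ℝ) + 1) ^ 2 ≤ (2 ^ n) ^ 2 := by gcongr
    _ = 4 ^ n := by rw [← pow_mul, mul_comm, pow_mul]; norm_num

lemma abs_sin_nat_mul_le (n : ℕ) (x : ℝ) : |Real.sin (n * x)| ≤ n * |Real.sin x| := by
  induction n with
  | zero => simp
  | succ n ih =>
    push_cast
    rw [add_mul, one_mul, Real.sin_add]
    calc |Real.sin (n * x) * Real.cos x + Real.cos (n * x) * Real.sin x|
        ≤ |Real.sin (n * x)| * |Real.cos x| + |Real.cos (n * x)| * |Real.sin x| := by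
          rw [← abs_mul, ← abs_mul]; exact abs_add_le _ _
      _ ≤ |Real.sin (n * x)| * 1 + 1 * |Real.sin x| := by
          gcongr <;> exact Real.abs_cos_le_one _
      _ ≤ (n + 1) * |Real.sin x| := by linarith

noncomputable def theta₃ (t β : ℝ) : ℝ :=
  ∑' k : ℤ, Real.exp (-π * k ^ 2 * t) * Real.cos (2 * π * k * β)

noncomputable def periodizedGaussian (c u : ℝ) : ℝ := ∑' k : ℤ, Real.exp (-c * (u + k) ^ 2)

lemma hasSum_re_jacobiTheta₂_ofReal_I_mul {t : ℝ} (ht : 0 < t) (β : ℝ) :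
    HasSum (fun k : ℤ => Real.exp (-π * k ^ 2 * t) * Real.cos (2 * π * k * β))
      (jacobiTheta₂ β (I * t)).re := by
  have h := Complex.hasSum_re (hasSum_jacobiTheta₂_term (β : ℂ) (τ := I * t) (by simpa using ht))
  refine h.congr_fun fun k => ?_
  have hexp : 2 * π * I * k * β + π * I * k ^ 2 * (I * t) =
      ((-π * k ^ 2 * t : ℝ) : ℂ) + ((2 * π * k * β : ℝ) : ℂ) * I := by
    push_cast
    ring_nf
    rw [I_sq]
    ring
  rw [jacobiTheta₂_term, hexp, exp_re]
  simp only [add_re, add_im, ofReal_re, ofReal_im, re_ofReal_mul, im_ofReal_mul, I_re, I_im,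
    mul_zero, mul_one, add_zero, zero_add]

lemma hasSum_theta₃ {t : ℝ} (ht : 0 < t) (β : ℝ) :
    HasSum (fun k : ℤ => Real.exp (-π * k ^ 2 * t) * Real.cos (2 * π * k * β)) (theta₃ t β) :=
  (hasSum_re_jacobiTheta₂_ofReal_I_mul ht β).summable.hasSum

lemma jacobiTheta₂_ofReal_I_mul {t : ℝ} (ht : 0 < t) (β : ℝ) :
    jacobiTheta₂ β (I * t) = theta₃ t β := by
  rw [theta₃, (hasSum_re_jacobiTheta₂_ofReal_I_mul ht β).tsum_eq,
    conj_eq_iff_re.mp (by rw [jacobiTheta₂_conj]; simp)]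

lemma theta₃_eq_inv_sqrt_mul_periodizedGaussian {t : ℝ} (ht : 0 < t) (β : ℝ) :
    theta₃ t β = (√t)⁻¹ * periodizedGaussian (π / t) β := by
  apply ofReal_injective
  rw [← jacobiTheta₂_ofReal_I_mul ht, ← jacobiTheta₂_neg_left, jacobiTheta₂]
  convert Complex.tsum_exp_neg_quadratic (a := t) (by simpa using ht) (-I * β) using 1
  · refine tsum_congr fun k => ?_
    rw [jacobiTheta₂_term]
    congr 1
    ring_nf
    rw [I_sq]
    ring
  · rw [periodizedGaussian, ofReal_mul, ofReal_tsum, ofReal_inv, Real.sqrt_eq_rpow,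
      ofReal_cpow ht.le, one_div]
    push_cast
    congr 1
    · norm_num
    refine tsum_congr fun k => ?_
    rw [← mul_assoc, mul_neg, I_mul_I, neg_neg, one_mul]
    congr 1
    ring

lemma hasSum_theta₃_nat {t : ℝ} (ht : 0 < t) (β : ℝ) :
    HasSum (fun n : ℕ => 2 * (Real.exp (-π * t) ^ (n ^ 2) * Real.cos (2 * π * n * β)))
      (theta₃ t β + 1) := by
  have h := (hasSum_theta₃ ht β).nat_add_neg
  rw [show Real.exp (-π * ((0 : ℤ) : ℝ) ^ 2 * t) * Real.cos (2 * π * ((0 : ℤ) : ℝ) * β) = 1 by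
    simp] at h
  refine h.congr_fun fun n => ?_
  rw [← Real.exp_nat_mul]
  push_cast
  simp only [neg_sq, mul_neg, neg_mul, Real.cos_neg]
  ring_nf

lemma sq_mul_pow_sq_le {q : ℝ} (hq₀ : 0 ≤ q) (hq₁ : q ≤ 1) (n : ℕ) :
    ((n : ℝ) + 2) ^ 2 * q ^ ((n + 2) ^ 2) ≤ q * (4 * q ^ 3) ^ (n + 1) := by
  have hsq : ((n : ℝ) + 2) ^ 2 ≤ 4 ^ (n + 1) := by
    simpa [add_assoc, one_add_one_eq_two] using sq_le_four_pow (n + 1)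
  have hpow : q ^ ((n + 2) ^ 2) ≤ q ^ (3 * (n + 1) + 1) :=
    pow_le_pow_of_le_one hq₀ hq₁ (by nlinarith)
  calc ((n : ℝ) + 2) ^ 2 * q ^ ((n + 2) ^ 2) ≤ 4 ^ (n + 1) * q ^ (3 * (n + 1) + 1) :=
        mul_le_mul hsq hpow (by positivity) (by positivity)
    _ = q * (4 * q ^ 3) ^ (n + 1) := by ring

lemma abs_pow_sq_mul_sin_mul_sin_le {q : ℝ} (hq₀ : 0 ≤ q) (hq₁ : q ≤ 1) (σ δ : ℝ) (n : ℕ) :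
    |q ^ ((n + 2) ^ 2) * (Real.sin ((n + 2) * σ) * Real.sin ((n + 2) * δ))| ≤
      |Real.sin σ * Real.sin δ| * q * (4 * q ^ 3) ^ (n + 1) := by
  have hσ := abs_sin_nat_mul_le (n + 2) σ
  have hδ := abs_sin_nat_mul_le (n + 2) δ
  push_cast at hσ hδ
  calc |q ^ ((n + 2) ^ 2) * (Real.sin ((n + 2) * σ) * Real.sin ((n + 2) * δ))|
      = q ^ ((n + 2) ^ 2) * (|Real.sin ((n + 2) * σ)| * |Real.sin ((n + 2) * δ)|) := by
        rw [abs_mul, abs_mul, abs_of_nonneg (by positivity)]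
    _ ≤ q ^ ((n + 2) ^ 2) * ((n + 2) * |Real.sin σ| * ((n + 2) * |Real.sin δ|)) := by gcongr
    _ = |Real.sin σ * Real.sin δ| * (((n : ℝ) + 2) ^ 2 * q ^ ((n + 2) ^ 2)) := by
        rw [abs_mul]; ring
    _ ≤ |Real.sin σ * Real.sin δ| * (q * (4 * q ^ 3) ^ (n + 1)) :=
        mul_le_mul_of_nonneg_left (sq_mul_pow_sq_le hq₀ hq₁ n) (abs_nonneg _)
    _ = |Real.sin σ * Real.sin δ| * q * (4 * q ^ 3) ^ (n + 1) := by ring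

/-- The terms with `n ≥ 2` sum to at most `4q³ / (1 - 4q³) < 1` times the `n = 1` term. -/
lemma pos_of_hasSum_pow_sq_mul_sin_mul_sin {q σ δ S : ℝ} (hq₀ : 0 < q) (hq : q < 1 / 2)
    (hσ : 0 < Real.sin σ) (hδ : 0 < Real.sin δ)
    (hS : HasSum (fun n : ℕ => q ^ (n ^ 2) * (Real.sin (n * σ) * Real.sin (n * δ))) S) :
    0 < S := by
  set s := Real.sin σ * Real.sin δ
  have hs : 0 < s := mul_pos hσ hδ
  set r := 4 * q ^ 3
  have hr₀ : 0 ≤ r := by positivity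
  have hr : r < 1 / 2 := by nlinarith [pow_lt_pow_left₀ hq hq₀.le three_ne_zero]
  have htail := (hasSum_nat_add_iff' 2).mpr hS
  simp only [Finset.sum_range_succ, Finset.sum_range_zero, Nat.cast_zero, Nat.cast_one, zero_mul,
    Real.sin_zero, mul_zero, one_mul, zero_add, one_pow, pow_one] at htail
  push_cast at htail
  have hle (n : ℕ) : -(s * q * r) * r ^ n ≤
      q ^ ((n + 2) ^ 2) * (Real.sin ((n + 2) * σ) * Real.sin ((n + 2) * δ)) := by
    have h := abs_pow_sq_mul_sin_mul_sin_le hq₀.le (by linarith) σ δ n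
    rw [abs_of_pos hs, pow_succ (4 * q ^ 3) n] at h
    change _ ≤ s * q * (r ^ n * r) at h
    linarith [neg_abs_le (q ^ ((n + 2) ^ 2) * (Real.sin ((n + 2) * σ) * Real.sin ((n + 2) * δ)))]
  have hlow := hasSum_le hle
    ((hasSum_geometric_of_lt_one hr₀ (by linarith)).mul_left (-(s * q * r))) htail
  have : s * q * r * (1 - r)⁻¹ < s * q := by
    rw [mul_assoc, ← div_eq_mul_inv]
    exact mul_lt_of_lt_one_right (by positivity) ((div_lt_one (by linarith)).mpr (by linarith))
  linarith

theorem theta₃_strictAntiOn {t : ℝ} (ht : Real.exp (-π * t) < 1 / 2) :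
    StrictAntiOn (theta₃ t) (Set.Icc 0 (1 / 2)) := by
  have ht₀ : 0 < t := by
    by_contra! h
    linarith [Real.one_le_exp (by nlinarith [Real.pi_pos] : 0 ≤ -π * t)]
  rintro β₁ ⟨hβ₁, -⟩ β₂ ⟨-, hβ₂⟩ hβ₁₂
  have hterm (n : ℕ) :
      Real.exp (-π * t) ^ (n ^ 2) *
          (Real.sin (n * (π * (β₁ + β₂))) * Real.sin (n * (π * (β₂ - β₁)))) =
        (2 * (Real.exp (-π * t) ^ (n ^ 2) * Real.cos (2 * π * n * β₁)) -
          2 * (Real.exp (-π * t) ^ (n ^ 2) * Real.cos (2 * π * n * β₂))) / 4 := by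
    rw [← mul_sub, ← mul_sub, Real.cos_sub_cos,
      show (2 * π * n * β₁ + 2 * π * n * β₂) / 2 = n * (π * (β₁ + β₂)) by ring,
      show (2 * π * n * β₁ - 2 * π * n * β₂) / 2 = -(n * (π * (β₂ - β₁))) by ring, Real.sin_neg]
    ring
  have hσ : 0 < Real.sin (π * (β₁ + β₂)) :=
    Real.sin_pos_of_pos_of_lt_pi (by nlinarith [Real.pi_pos]) (by nlinarith [Real.pi_pos])
  have hδ : 0 < Real.sin (π * (β₂ - β₁)) :=
    Real.sin_pos_of_pos_of_lt_pi (by nlinarith [Real.pi_pos]) (by nlinarith [Real.pi_pos])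
  have h := ((hasSum_theta₃_nat ht₀ β₁).sub (hasSum_theta₃_nat ht₀ β₂)).div_const 4
  linarith [pos_of_hasSum_pow_sq_mul_sin_mul_sin (Real.exp_pos _) ht hσ hδ (h.congr_fun hterm)]

lemma exists_exp_neg_mul_sq_sub_eq (c : ℝ) {a b : ℝ} (hab : a < b) :
    ∃ ξ ∈ Set.Ioo a b, Real.exp (-c * a ^ 2) - Real.exp (-c * b ^ 2) =
      2 * c * (b - a) * (ξ * Real.exp (-c * ξ ^ 2)) := by
  have hderiv (x : ℝ) : HasDerivAt (fun x => Real.exp (-c * x ^ 2))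
      (Real.exp (-c * x ^ 2) * (-c * (2 * x))) x := by
    simpa using ((hasDerivAt_pow 2 x).const_mul (-c)).exp
  obtain ⟨ξ, hξ, h⟩ := exists_hasDerivAt_eq_slope _ _ hab (by fun_prop) fun x _ => hderiv x
  refine ⟨ξ, hξ, ?_⟩
  rw [eq_div_iff (sub_ne_zero.mpr hab.ne')] at h
  linear_combination h

section PeriodizedGaussian

variable {c : ℝ}

lemma mul_exp_neg_mul_sq_lt {u v : ℝ} (hu : 0 < u) (hcu : 1 ≤ 2 * c * u ^ 2) (huv : u < v) :
    v * Real.exp (-c * v ^ 2) < u * Real.exp (-c * u ^ 2) := by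
  have hc : 0 < c := by nlinarith
  have key : v < u * Real.exp (c * (v ^ 2 - u ^ 2)) :=
    calc v < u * (1 + c * (v ^ 2 - u ^ 2)) := by
          nlinarith [mul_pos (mul_pos hc hu) (sub_pos.mpr huv)]
      _ ≤ u * Real.exp (c * (v ^ 2 - u ^ 2)) := by
          gcongr
          linarith [Real.add_one_le_exp (c * (v ^ 2 - u ^ 2))]
  calc v * Real.exp (-c * v ^ 2)
      < u * Real.exp (c * (v ^ 2 - u ^ 2)) * Real.exp (-c * v ^ 2) := by gcongr
    _ = u * Real.exp (-c * u ^ 2) := by rw [mul_assoc, ← Real.exp_add]; ring_nf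

lemma exp_neg_mul_sq_sub_lt_sub {a b h : ℝ} (ha : 0 < a) (hca : 1 ≤ 2 * c * a ^ 2) (hh : 0 < h)
    (hab : a + h ≤ b) :
    Real.exp (-c * b ^ 2) - Real.exp (-c * (b + h) ^ 2) <
      Real.exp (-c * a ^ 2) - Real.exp (-c * (a + h) ^ 2) := by
  have hc : 0 < c := by nlinarith
  obtain ⟨ξ, hξ, hξa⟩ := exists_exp_neg_mul_sq_sub_eq c (lt_add_of_pos_right a hh)
  obtain ⟨η, hη, hηb⟩ := exists_exp_neg_mul_sq_sub_eq c (lt_add_of_pos_right b hh)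
  have hξ0 : 0 < ξ := ha.trans hξ.1
  have hφ : η * Real.exp (-c * η ^ 2) < ξ * Real.exp (-c * ξ ^ 2) :=
    mul_exp_neg_mul_sq_lt hξ0 (by nlinarith [hξ.1]) (by linarith [hξ.2, hη.1])
  rw [hξa, hηb, add_sub_cancel_left, add_sub_cancel_left]
  gcongr

lemma exp_neg_mul_sq_pair_sub_le (hc : 0 ≤ c) {k x y : ℝ} (hk : 0 ≤ k) (hxy : x ≤ y)
    (hxy' : 0 ≤ x + y) :
    (Real.exp (-c * (k - y) ^ 2) + Real.exp (-c * (k + y) ^ 2)) -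
        (Real.exp (-c * (k - x) ^ 2) + Real.exp (-c * (k + x) ^ 2)) ≤
      8 * c ^ 2 * k ^ 2 * y * (y - x) * Real.exp (-c * (k - y) ^ 2) := by
  set A := Real.exp (-c * (k - y) ^ 2)
  set B := Real.exp (-c * (k + y) ^ 2)
  have hA : 0 < A := Real.exp_pos _
  have hB : 0 < B := Real.exp_pos _
  have hkx : A * (1 - c * (y - x) * (2 * k - x - y)) ≤ Real.exp (-c * (k - x) ^ 2) := by
    have : Real.exp (-c * (k - x) ^ 2) = A * Real.exp (-(c * (y - x) * (2 * k - x - y))) := by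
      rw [← Real.exp_add]; ring_nf
    rw [this]
    gcongr
    linarith [Real.add_one_le_exp (-(c * (y - x) * (2 * k - x - y)))]
  have hkx' : B * (1 + c * (y - x) * (2 * k + x + y)) ≤ Real.exp (-c * (k + x) ^ 2) := by
    have : Real.exp (-c * (k + x) ^ 2) = B * Real.exp (c * (y - x) * (2 * k + x + y)) := by
      rw [← Real.exp_add]; ring_nf
    rw [this]
    gcongr
    linarith [Real.add_one_le_exp (c * (y - x) * (2 * k + x + y))]
  have hAB : A - B ≤ A * (4 * c * k * y) := by
    have : B = A * Real.exp (-(4 * c * k * y)) := by simp only [A, B, ← Real.exp_add]; ring_nf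
    rw [this]
    nlinarith [Real.add_one_le_exp (-(4 * c * k * y))]
  have hcyx : 0 ≤ c * (y - x) := mul_nonneg hc (by linarith)
  nlinarith [mul_nonneg hcyx (mul_nonneg hxy' (add_pos hA hB).le),
    mul_le_mul_of_nonneg_left hAB (mul_nonneg hcyx hk)]

lemma sq_mul_exp_neg_mul_sq_le (hc : 0 ≤ c) (n : ℕ) :
    ((n : ℝ) + 1) ^ 2 * Real.exp (-c * (n + 3 / 4) ^ 2) ≤
      Real.exp (-c / 16) * Real.exp (-c / 2) * (4 * Real.exp (-(3 / 2 * c))) ^ n := by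
  have hexp : Real.exp (-c * (n + 3 / 4) ^ 2) ≤
      Real.exp (-c / 16) * Real.exp (-c / 2) * Real.exp (-(3 / 2 * c)) ^ n := by
    rw [← Real.exp_nat_mul, ← Real.exp_add, ← Real.exp_add]
    gcongr
    nlinarith [mul_nonneg hc (sq_nonneg (n : ℝ))]
  calc ((n : ℝ) + 1) ^ 2 * Real.exp (-c * (n + 3 / 4) ^ 2)
      ≤ 4 ^ n * (Real.exp (-c / 16) * Real.exp (-c / 2) * Real.exp (-(3 / 2 * c)) ^ n) := by
        gcongr
        exact sq_le_four_pow n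
    _ = _ := by rw [mul_pow]; ring

lemma sixteen_mul_lt_exp_half (hc : 12 ≤ c) : 16 * c < Real.exp (c / 2) := by
  have he : (2.7182 : ℝ) ^ 6 ≤ Real.exp 6 := by
    rw [show (6 : ℝ) = (6 : ℕ) * 1 by norm_num, Real.exp_nat_mul]
    gcongr
    linarith [Real.exp_one_gt_d9]
  have hsplit : Real.exp (c / 2) = Real.exp 6 * Real.exp (c / 2 - 6) := by
    rw [← Real.exp_add]; ring_nf
  have := Real.add_one_le_exp (c / 2 - 6)
  nlinarith

lemma four_mul_exp_neg_le_half (hc : 12 ≤ c) : 4 * Real.exp (-(3 / 2 * c)) ≤ 1 / 2 := by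
  have h8 : 8 ≤ Real.exp (3 / 2 * c) := by linarith [Real.add_one_le_exp (3 / 2 * c)]
  rw [Real.exp_neg]
  have := Real.exp_pos (3 / 2 * c)
  rw [mul_inv_le_iff₀ this]
  linarith

lemma eight_mul_exp_neg_half_div_lt (hc : 12 ≤ c) :
    8 * c * Real.exp (-c / 2) / (1 - 4 * Real.exp (-(3 / 2 * c))) < 1 := by
  have hr := four_mul_exp_neg_le_half hc
  have h16 := sixteen_mul_lt_exp_half hc
  have hpos := Real.exp_pos (c / 2)
  rw [div_lt_one (by linarith), neg_div, Real.exp_neg]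
  have : 8 * c * (Real.exp (c / 2))⁻¹ < 1 / 2 := by
    rw [← div_eq_mul_inv, div_lt_iff₀ hpos]; linarith
  linarith

lemma summable_exp_neg_mul_add_sq (hc : 0 < c) (u : ℝ) :
    Summable fun k : ℤ => Real.exp (-c * (u + k) ^ 2) := by
  -- the theta terms at `z = i c u / π`, `τ = i c / π` have norm `exp (-c k² - 2 c u k)`
  have h := ((summable_jacobiTheta₂_term_iff (I * (c * u / π)) (I * (c / π))).mpr
    (by simpa using div_pos hc Real.pi_pos)).norm.mul_left (Real.exp (-c * u ^ 2))
  refine h.congr fun k => ?_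
  rw [norm_jacobiTheta₂_term, ← Real.exp_add]
  congr 1
  simp only [neg_mul, mul_im, I_re, div_ofReal_im, ofReal_im, zero_div, mul_zero, I_im,
    div_ofReal_re, ofReal_re, one_mul, zero_add, zero_mul, add_zero, mul_re, sub_zero]
  field_simp
  ring

lemma hasSum_periodizedGaussian_pairs (hc : 0 < c) (u : ℝ) :
    HasSum (fun n : ℕ => Real.exp (-c * (n + u) ^ 2) + Real.exp (-c * (n + 1 - u) ^ 2))
      (periodizedGaussian c u) :=
  (summable_exp_neg_mul_add_sq hc u).hasSum.nat_add_neg_add_one.congr_fun fun n => by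
    push_cast
    ring_nf

lemma hasSum_periodizedGaussian_symm_pairs (hc : 0 < c) (u : ℝ) :
    HasSum (fun n : ℕ => Real.exp (-c * (n + 1 - u) ^ 2) + Real.exp (-c * (n + 1 + u) ^ 2))
      (periodizedGaussian c u - Real.exp (-c * u ^ 2)) := by
  have h := (hasSum_nat_add_iff' 1).mpr (summable_exp_neg_mul_add_sq hc u).hasSum.nat_add_neg
  simp only [Finset.sum_range_one, Nat.cast_zero, Int.cast_zero, neg_zero, add_zero,
    add_sub_add_right_eq_sub] at h
  exact h.congr_fun fun n => by
    rw [add_comm]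
    push_cast
    ring_nf

lemma exp_neg_mul_sq_pair_sub_le_geometric (hc : 0 ≤ c) {x y : ℝ} (hx : 0 ≤ x) (hxy : x ≤ y)
    (hy : y ≤ 1 / 4) (n : ℕ) :
    (Real.exp (-c * (n + 1 - y) ^ 2) + Real.exp (-c * (n + 1 + y) ^ 2)) -
        (Real.exp (-c * (n + 1 - x) ^ 2) + Real.exp (-c * (n + 1 + x) ^ 2)) ≤
      8 * c ^ 2 * y * (y - x) * (Real.exp (-c / 16) * Real.exp (-c / 2)) *
        (4 * Real.exp (-(3 / 2 * c))) ^ n := by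
  have hcoef : 0 ≤ 8 * c ^ 2 * y * (y - x) := by
    have := hx.trans hxy
    have := sub_nonneg.mpr hxy
    positivity
  have hshift : Real.exp (-c * (n + 1 - y) ^ 2) ≤ Real.exp (-c * (n + 3 / 4) ^ 2) := by
    have h₀ : (0 : ℝ) ≤ n + 3 / 4 := by positivity
    have h₁ : (n : ℝ) + 3 / 4 ≤ n + 1 - y := by linarith
    exact Real.exp_le_exp.mpr (by nlinarith [mul_le_mul h₁ h₁ h₀ (h₀.trans h₁)])
  calc _ ≤ 8 * c ^ 2 * (n + 1) ^ 2 * y * (y - x) * Real.exp (-c * (n + 1 - y) ^ 2) :=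
        exp_neg_mul_sq_pair_sub_le hc (by positivity) hxy (by linarith)
    _ ≤ 8 * c ^ 2 * y * (y - x) * (((n : ℝ) + 1) ^ 2 * Real.exp (-c * (n + 3 / 4) ^ 2)) := by
        rw [show 8 * c ^ 2 * ((n : ℝ) + 1) ^ 2 * y * (y - x) =
          8 * c ^ 2 * y * (y - x) * (n + 1) ^ 2 by ring, mul_assoc]
        gcongr
    _ ≤ 8 * c ^ 2 * y * (y - x) *
          (Real.exp (-c / 16) * Real.exp (-c / 2) * (4 * Real.exp (-(3 / 2 * c))) ^ n) :=
        mul_le_mul_of_nonneg_left (sq_mul_exp_neg_mul_sq_le hc n) hcoef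
    _ = _ := by ring

lemma periodizedGaussian_lt_of_le_quarter (hc : 12 ≤ c) {x y : ℝ} (hx : 0 ≤ x) (hxy : x < y)
    (hy : y ≤ 1 / 4) : periodizedGaussian c y < periodizedGaussian c x := by
  have hc₀ : 0 < c := by linarith
  have hy₀ : 0 < y := hx.trans_lt hxy
  set r := 4 * Real.exp (-(3 / 2 * c)) with hr
  have hr₁ : r ≤ 1 / 2 := four_mul_exp_neg_le_half hc
  set K := 8 * c ^ 2 * y * (y - x) * (Real.exp (-c / 16) * Real.exp (-c / 2))
  have hloss := hasSum_le (exp_neg_mul_sq_pair_sub_le_geometric hc₀.le hx hxy.le hy)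
    ((hasSum_periodizedGaussian_symm_pairs hc₀ y).sub (hasSum_periodizedGaussian_symm_pairs hc₀ x))
    ((hasSum_geometric_of_lt_one (by positivity) (by linarith)).mul_left K)
  rw [← hr] at hloss
  have hgain : c * (y ^ 2 - x ^ 2) * Real.exp (-c * y ^ 2) ≤
      Real.exp (-c * x ^ 2) - Real.exp (-c * y ^ 2) := by
    have : Real.exp (-c * x ^ 2) = Real.exp (-c * y ^ 2) * Real.exp (c * (y ^ 2 - x ^ 2)) := by
      rw [← Real.exp_add]; ring_nf
    nlinarith [Real.add_one_le_exp (c * (y ^ 2 - x ^ 2)), Real.exp_pos (-c * y ^ 2)]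
  have hquarter : Real.exp (-c / 16) ≤ Real.exp (-c * y ^ 2) :=
    Real.exp_le_exp.mpr (by nlinarith [mul_le_mul hy hy hy₀.le (by norm_num : (0 : ℝ) ≤ 1 / 4)])
  have hcyx : 0 < c * y * (y - x) := by have := sub_pos.mpr hxy; positivity
  have hK : K * (1 - r)⁻¹ < c * (y ^ 2 - x ^ 2) * Real.exp (-c * y ^ 2) :=
    calc K * (1 - r)⁻¹
        = c * y * (y - x) * Real.exp (-c / 16) * (8 * c * Real.exp (-c / 2) / (1 - r)) := by
          ring
      _ < c * y * (y - x) * Real.exp (-c / 16) :=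
          mul_lt_of_lt_one_right (by positivity) (eight_mul_exp_neg_half_div_lt hc)
      _ ≤ c * (y ^ 2 - x ^ 2) * Real.exp (-c * y ^ 2) :=
          mul_le_mul (by nlinarith) hquarter (by positivity) (by nlinarith)
  linarith

lemma periodizedGaussian_lt_of_quarter_le (hc : 8 ≤ c) {x y : ℝ} (hx : 1 / 4 ≤ x) (hxy : x < y)
    (hy : y ≤ 1 / 2) : periodizedGaussian c y < periodizedGaussian c x := by
  have hc0 : 0 < c := by linarith
  have hterm (n : ℕ) : 0 <
      (Real.exp (-c * (n + x) ^ 2) + Real.exp (-c * (n + 1 - x) ^ 2)) -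
        (Real.exp (-c * (n + y) ^ 2) + Real.exp (-c * (n + 1 - y) ^ 2)) := by
    have hn : (0 : ℝ) ≤ n := Nat.cast_nonneg n
    have h := exp_neg_mul_sq_sub_lt_sub (c := c) (a := n + x) (b := n + 1 - y) (h := y - x)
      (by linarith) (by nlinarith) (by linarith) (by linarith)
    rw [show (n : ℝ) + x + (y - x) = n + y by ring,
      show (n : ℝ) + 1 - y + (y - x) = n + 1 - x by ring] at h
    linarith
  have h := (hasSum_periodizedGaussian_pairs hc0 x).sub (hasSum_periodizedGaussian_pairs hc0 y)
  linarith [hasSum_lt (fun n => (hterm n).le) (hterm 0) hasSum_zero h]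

theorem periodizedGaussian_strictAntiOn (hc : 12 ≤ c) :
    StrictAntiOn (periodizedGaussian c) (Set.Icc 0 (1 / 2)) := by
  rintro x ⟨hx, -⟩ y ⟨-, hy⟩ hxy
  rcases le_or_gt y (1 / 4) with hy4 | hy4
  · exact periodizedGaussian_lt_of_le_quarter hc hx hxy hy4
  rcases le_or_gt (1 / 4) x with hx4 | hx4
  · exact periodizedGaussian_lt_of_quarter_le (by linarith) hx4 hxy hy
  calc periodizedGaussian c y < periodizedGaussian c (1 / 4) :=
        periodizedGaussian_lt_of_quarter_le (by linarith) le_rfl hy4 hy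
    _ < periodizedGaussian c x := periodizedGaussian_lt_of_le_quarter hc hx hx4 le_rfl

end PeriodizedGaussian

/-- For every fixed `t > 0`, the function `β ↦ ϑ₃(β; it)` is real-valued
(it equals `∑_{k∈ℤ} e^{−πk²t} cos(2πkβ)`) and strictly decreasing on `[0, 1/2]`. -/
theorem jacobiTheta3_strict_anti (t : ℝ) (ht : 0 < t)
    (Θ : ℝ → ℝ)
    (hΘ : ∀ β : ℝ, Θ β = ∑' k : ℤ, Real.exp (-π * (k : ℝ) ^ 2 * t) * Real.cos (2 * π * k * β)) :
    (∀ β : ℝ,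
      (∑' k : ℤ, Complex.exp (-(π : ℂ) * (k : ℂ) ^ 2 * (t : ℂ) +
        2 * (π : ℂ) * Complex.I * (k : ℂ) * (β : ℂ))) = (Θ β : ℂ)) ∧
    (∀ β₁ β₂ : ℝ, 0 ≤ β₁ → β₁ < β₂ → β₂ ≤ 1 / 2 → Θ β₂ < Θ β₁) := by
  obtain rfl : Θ = theta₃ t := funext hΘ
  refine ⟨fun β => ?_, fun β₁ β₂ hβ₁ hβ₁₂ hβ₂ => ?_⟩
  · rw [← jacobiTheta₂_ofReal_I_mul ht β, jacobiTheta₂]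
    refine tsum_congr fun k => ?_
    rw [jacobiTheta₂_term]
    ring_nf
    rw [I_sq]
    ring_nf
  have hmem₁ : β₁ ∈ Set.Icc (0 : ℝ) (1 / 2) := ⟨hβ₁, by linarith⟩
  have hmem₂ : β₂ ∈ Set.Icc (0 : ℝ) (1 / 2) := ⟨by linarith, hβ₂⟩
  rcases le_or_gt t (1 / 4) with hsmall | hlarge
  · have hc : 12 ≤ π / t := by
      rw [le_div_iff₀ ht]
      nlinarith [Real.pi_gt_three]
    rw [theta₃_eq_inv_sqrt_mul_periodizedGaussian ht, theta₃_eq_inv_sqrt_mul_periodizedGaussian ht]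
    exact mul_lt_mul_of_pos_left (periodizedGaussian_strictAntiOn hc hmem₁ hmem₂ hβ₁₂)
      (by positivity)
  · refine theta₃_strictAntiOn ?_ hmem₁ hmem₂ hβ₁₂
    calc Real.exp (-π * t) < Real.exp (-Real.log 2) :=
          Real.exp_lt_exp.mpr (by nlinarith [Real.log_two_lt_d9, Real.pi_gt_d2])
      _ = 1 / 2 := by rw [Real.exp_neg, Real.exp_log two_pos, one_div]
end

section
/- For every α > 0 and every β ∈ ℝ, ∑_{n∈ℤ} exp(−πα(n + 1/2)²) ≤ ∑_{n∈ℤ} exp(−πα(n + β)²), with equality if and only if β − 1/2 ∈ ℤ. In other words, for each α > 0 the translated theta function β ↦ θ_{ℤ+β}(α) attains its minimum exactly at the points congruent to 1/2 modulo 1. -/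
/-!
By Poisson summation (`HurwitzZeta.evenKernel_functional_equation`),
`θ_{ℤ+β}(α) = α^{-1/2} (1 + 2 ∑_{m ≥ 1} e^{-π m² / α} cos (2π m β))`. For `α ≤ 2` the nome
`e^{-π/α}` is below `1/2`, and the `m = 1` term `4 cos² (πβ) e^{-π/α}` of
`θ_{ℤ+β}(α) - θ_{ℤ+1/2}(α)` dominates all the others, each of which is at least
`-4 m² cos² (πβ) e^{-π m²/α}`.

For `α ≥ 2` we stay on the lattice side: write `β ≡ ±(1/2 - t)` with `0 < t ≤ 1/2` and pair `n`
with `-n - 1`. The pair is `e^{-πα(s-t)²} + e^{-πα(s+t)²}` with `s = n + 1/2`, which exceeds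
`2 e^{-παs²}` because `e^{παt²} < cosh (2παst)`.
-/

open Real HurwitzZeta

namespace TranslatedTheta

lemma abs_sin_nat_mul_le (x : ℝ) : ∀ m : ℕ, |sin (m * x)| ≤ m * |sin x|
  | 0 => by simp
  | m + 1 => by
    have hm := abs_sin_nat_mul_le x m
    have h1 : |sin (m * x)| * |cos x| ≤ |sin (m * x)| :=
      mul_le_of_le_one_right (abs_nonneg _) (abs_cos_le_one x)
    have h2 : |cos (m * x)| * |sin x| ≤ |sin x| :=
      mul_le_of_le_one_left (abs_nonneg _) (abs_cos_le_one _)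
    calc |sin ((m + 1 : ℕ) * x)| = |sin (m * x) * cos x + cos (m * x) * sin x| := by
          rw [← sin_add]; push_cast; ring_nf
      _ ≤ |sin (m * x)| * |cos x| + |cos (m * x)| * |sin x| := by
          simpa only [abs_mul] using abs_add_le (sin (m * x) * cos x) (cos (m * x) * sin x)
      _ ≤ (m + 1 : ℕ) * |sin x| := by push_cast; linarith

lemma neg_two_mul_sq_mul_cos_sq_le_cos_sub_cos (β : ℝ) (m : ℕ) :
    -(2 * m ^ 2 * cos (π * β) ^ 2) ≤ cos (2 * π * β * m) - cos (π * m) := by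
  set x := π * β - π / 2
  have hcos : cos (π * β) = -sin x := by rw [← cos_add_pi_div_two, sub_add_cancel]
  have hdiff : cos (2 * π * β * m) - cos (π * m) = -2 * (-1) ^ m * sin (m * x) ^ 2 := by
    rw [show 2 * π * β * m = 2 * (m * x) + m * π by ring, mul_comm π, cos_add,
      cos_nat_mul_pi, sin_nat_mul_pi, cos_two_mul, cos_sq']
    ring
  have hsin : sin (m * x) ^ 2 ≤ m ^ 2 * sin x ^ 2 := by
    simpa only [sq_abs, mul_pow] using pow_le_pow_left₀ (abs_nonneg _) (abs_sin_nat_mul_le x m) 2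
  rw [hdiff, hcos]
  rcases neg_one_pow_eq_or ℝ m with h | h <;> rw [h] <;> nlinarith [sq_nonneg (sin (m * x))]

lemma sq_mul_pow_sq_lt {q : ℝ} (hq0 : 0 < q) (hq : q < 1 / 2) (n : ℕ) :
    ((n : ℝ) + 2) ^ 2 * q ^ ((n + 2) ^ 2) < q / 2 / 2 ^ n := by
  have h4 : ((n : ℝ) + 2) ^ 2 ≤ 4 ^ (n + 1) := by
    have : n + 2 ≤ 2 ^ (n + 1) := Nat.lt_two_pow_self
    exact_mod_cast (Nat.pow_le_pow_left this 2).trans_eq (by rw [← pow_mul, pow_mul']; norm_num)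
  have hpow : q ^ ((n + 2) ^ 2) ≤ q ^ (3 * n + 4) :=
    pow_le_pow_of_le_one hq0.le (by linarith) (by nlinarith)
  have hr : 4 * q ^ 3 < 1 / 2 := by nlinarith [pow_lt_pow_left₀ hq hq0.le three_ne_zero]
  calc ((n : ℝ) + 2) ^ 2 * q ^ ((n + 2) ^ 2) ≤ 4 ^ (n + 1) * q ^ (3 * n + 4) := by gcongr
    _ = q * (4 * q ^ 3) ^ (n + 1) := by ring
    _ < q * (1 / 2) ^ (n + 1) := by gcongr
    _ = q / 2 / 2 ^ n := by rw [one_div_pow]; ring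

lemma tsum_sq_mul_exp_lt {t : ℝ} (ht : 0 < t) (hq : exp (-π * t) < 1 / 2) :
    ∑' n : ℕ, ((n : ℝ) + 2) ^ 2 * exp (-π * ((n : ℝ) + 2) ^ 2 * t) < exp (-π * t) := by
  have hterm (n : ℕ) : ((n : ℝ) + 2) ^ 2 * exp (-π * ((n : ℝ) + 2) ^ 2 * t)
      < exp (-π * t) / 2 / 2 ^ n := by
    rw [show -π * ((n : ℝ) + 2) ^ 2 * t = ((n + 2) ^ 2 : ℕ) * (-π * t) by push_cast; ring,
      exp_nat_mul]
    exact sq_mul_pow_sq_lt (exp_pos _) hq n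
  calc _ < ∑' n : ℕ, exp (-π * t) / 2 / 2 ^ n :=
        Summable.tsum_lt_tsum (i := 0) (fun n => (hterm n).le) (hterm 0)
          (HurwitzKernelBounds.summable_f_nat 2 2 ht) (summable_geometric_two' _)
    _ = exp (-π * t) := tsum_geometric_two' _

lemma cosKernel_half_lt {β t : ℝ} (ht : 0 < t) (hq : exp (-π * t) < 1 / 2)
    (hβ : cos (π * β) ≠ 0) : cosKernel ↑(1 / 2 : ℝ) t < cosKernel β t := by
  have hd := (hasSum_nat_cosKernel₀ β ht).sub (hasSum_nat_cosKernel₀ (1 / 2) ht)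
  rw [sub_sub_sub_cancel_right, ← hasSum_nat_add_iff' 1] at hd
  simp only [← sub_mul, ← mul_sub, show ∀ x : ℝ, 2 * π * (1 / 2) * x = π * x from fun x => by ring,
    Finset.sum_range_one, Nat.cast_zero, Nat.cast_succ, zero_add, one_pow, mul_one] at hd
  have hT := (HurwitzKernelBounds.summable_f_nat 2 2 ht).hasSum.mul_left (-(4 * cos (π * β) ^ 2))
  have hle := hasSum_le (fun n => ?_) hT hd
  · have hd0 : cos (2 * π * β) - cos π = 2 * cos (π * β) ^ 2 := by
      rw [cos_pi, mul_assoc, cos_two_mul]; ring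
    have hc : 0 < cos (π * β) ^ 2 := by positivity
    simp only [HurwitzKernelBounds.f_nat, hd0] at hle
    nlinarith [mul_lt_mul_of_pos_left (tsum_sq_mul_exp_lt ht hq) hc]
  · have key := neg_two_mul_sq_mul_cos_sq_le_cos_sub_cos β (n + 2)
    push_cast at key
    rw [HurwitzKernelBounds.f_nat, show (n : ℝ) + 1 + 1 = n + 2 by ring]
    nlinarith [mul_le_mul_of_nonneg_left key (exp_pos (-π * ((n : ℝ) + 2) ^ 2 * t)).le]

lemma evenKernel_half_lt_of_le_two {α β : ℝ} (hα : 0 < α) (hα2 : α ≤ 2)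
    (hβ : cos (π * β) ≠ 0) : evenKernel ↑(1 / 2 : ℝ) α < evenKernel β α := by
  have hq : exp (-π * (1 / α)) < 1 / 2 := by
    have h1 : 1 < π * (1 / α) := by rw [mul_one_div, one_lt_div hα]; linarith [pi_gt_three]
    have h2 : 2 < exp (π * (1 / α)) := by linarith [add_one_lt_exp (by positivity : π * (1 / α) ≠ 0)]
    rw [neg_mul, exp_neg, one_div 2]
    exact (inv_lt_inv₀ (exp_pos _) two_pos).2 h2
  rw [evenKernel_functional_equation, evenKernel_functional_equation]
  exact mul_lt_mul_of_pos_left (cosKernel_half_lt (by positivity) hq hβ) (by positivity)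

lemma one_add_sq_div_two_le_cosh (a : ℝ) : 1 + a ^ 2 / 2 ≤ cosh a := by
  have := sum_le_hasSum (Finset.range 2) (fun n _ => ?_) (hasSum_cosh a)
  · simpa [Finset.sum_range_succ] using this
  · rw [pow_mul]; positivity

lemma exp_lt_cosh {a b : ℝ} (ha : 0 < a) (hb : b ≤ a / 2) (hb' : b ≤ a ^ 2 / 6) :
    exp b < cosh a := by
  rcases le_or_gt 2 a with h2 | h2
  · have he : 2 < exp 1 := by linarith [exp_one_gt_d9]
    calc exp b ≤ exp (a - 1) := exp_le_exp.2 (by linarith)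
      _ = exp a / exp 1 := exp_sub a 1
      _ < exp a / 2 := div_lt_div_of_pos_left (exp_pos a) two_pos he
      _ < cosh a := by rw [cosh_eq]; linarith [exp_pos (-a)]
  · have hexp : exp b * (1 - b) ≤ 1 := by
      calc exp b * (1 - b) ≤ exp b * exp (-b) := by gcongr; exact one_sub_le_exp_neg b
        _ = 1 := by rw [← exp_add]; simp
    have hcosh := one_add_sq_div_two_le_cosh a
    have : 1 < cosh a * (1 - b) := by
      nlinarith [mul_pos (mul_pos ha ha) (by nlinarith : (0:ℝ) < 4 - a ^ 2)]
    nlinarith [exp_pos b]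

lemma two_mul_exp_lt_exp_add_exp {α s t : ℝ} (hα : 2 ≤ α) (hs : 1 / 2 ≤ s) (ht : 0 < t)
    (hts : t ≤ s) :
    2 * exp (-π * s ^ 2 * α) < exp (-π * (s - t) ^ 2 * α) + exp (-π * (s + t) ^ 2 * α) := by
  have hπα : 0 < π * α := by positivity
  have hcosh : exp (π * t ^ 2 * α) < cosh (2 * π * s * t * α) := by
    have h6 : 6 ≤ π * α := by nlinarith [pi_gt_three]
    have : 6 ≤ 4 * π * α * s ^ 2 := by nlinarith
    refine exp_lt_cosh (by positivity) ?_ ?_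
    · nlinarith [mul_pos hπα ht]
    · nlinarith [mul_pos hπα (mul_pos ht ht)]
  have hminus : exp (-π * (s - t) ^ 2 * α)
      = exp (-π * (s ^ 2 + t ^ 2) * α) * exp (2 * π * s * t * α) := by
    rw [← exp_add]; ring_nf
  have hplus : exp (-π * (s + t) ^ 2 * α)
      = exp (-π * (s ^ 2 + t ^ 2) * α) * exp (-(2 * π * s * t * α)) := by
    rw [← exp_add]; ring_nf
  calc 2 * exp (-π * s ^ 2 * α)
      = 2 * exp (-π * (s ^ 2 + t ^ 2) * α) * exp (π * t ^ 2 * α) := by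
        rw [mul_assoc 2, ← exp_add]; ring_nf
    _ < 2 * exp (-π * (s ^ 2 + t ^ 2) * α) * cosh (2 * π * s * t * α) := by gcongr
    _ = exp (-π * (s - t) ^ 2 * α) + exp (-π * (s + t) ^ 2 * α) := by
        rw [cosh_eq, hminus, hplus]; ring

lemma evenKernel_half_lt_of_two_le {α t : ℝ} (hα : 2 ≤ α) (ht : 0 < t) (ht' : t ≤ 1 / 2) :
    evenKernel ↑(1 / 2 : ℝ) α < evenKernel ↑(1 / 2 - t) α := by
  have hpair (u : ℝ) : HasSum (fun n : ℕ => exp (-π * (n + 1 / 2 - u) ^ 2 * α)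
      + exp (-π * (n + 1 / 2 + u) ^ 2 * α)) (evenKernel ↑(1 / 2 - u) α) :=
    (hasSum_int_evenKernel (1 / 2 - u) (by linarith)).nat_add_neg_add_one.congr_fun fun n => by
      push_cast; ring_nf
  have h0 := hpair 0
  simp only [sub_zero, add_zero, ← two_mul] at h0
  have hlt (n : ℕ) := two_mul_exp_lt_exp_add_exp (s := n + 1 / 2) hα
    (by linarith [n.cast_nonneg (α := ℝ)]) ht (by linarith [n.cast_nonneg (α := ℝ)])
  exact hasSum_lt (fun n => (hlt n).le) (hlt 0) h0 (hpair t)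

lemma coe_eq_coe_iff_exists_int {x y : ℝ} :
    (x : UnitAddCircle) = y ↔ ∃ k : ℤ, x - y = k := by
  rw [← sub_eq_zero, ← AddCircle.coe_sub, AddCircle.coe_eq_zero_iff]
  simp [eq_comm]

lemma exists_coe_eq_half_sub {β : ℝ} (hβ : (β : UnitAddCircle) ≠ ↑(1 / 2 : ℝ)) :
    ∃ t ∈ Set.Ioc (0 : ℝ) (1 / 2),
      (β : UnitAddCircle) = ↑(1 / 2 - t) ∨ (β : UnitAddCircle) = -↑(1 / 2 - t) := by
  set s := Int.fract (β - 1 / 2)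
  have hs0 : 0 < s := (Int.fract_nonneg _).lt_of_ne' fun h => hβ <|
    coe_eq_coe_iff_exists_int.2 ⟨⌊β - 1 / 2⌋, by rw [← sub_eq_zero, ← Int.fract]; exact h⟩
  have hs1 : s < 1 := Int.fract_lt_one _
  have hβs : (β : UnitAddCircle) = ↑(s - 1 / 2) :=
    coe_eq_coe_iff_exists_int.2 ⟨⌊β - 1 / 2⌋ + 1, by simp only [s, Int.fract]; push_cast; ring⟩
  rcases le_or_gt s (1 / 2) with hs | hs
  · refine ⟨s, ⟨hs0, hs⟩, Or.inr ?_⟩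
    rw [hβs, ← AddCircle.coe_neg, neg_sub]
  · refine ⟨1 - s, ⟨by linarith, by linarith⟩, Or.inl ?_⟩
    rw [hβs]
    ring_nf

theorem evenKernel_half_lt {α β : ℝ} (hα : 0 < α) (hβ : (β : UnitAddCircle) ≠ ↑(1 / 2 : ℝ)) :
    evenKernel ↑(1 / 2 : ℝ) α < evenKernel β α := by
  rcases le_total α 2 with hα2 | hα2
  · refine evenKernel_half_lt_of_le_two hα hα2 fun hcos => hβ ?_
    obtain ⟨k, hk⟩ := cos_eq_zero_iff.1 hcos
    exact coe_eq_coe_iff_exists_int.2 ⟨k, by nlinarith [pi_pos]⟩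
  · obtain ⟨t, ⟨ht, ht'⟩, hβt | hβt⟩ := exists_coe_eq_half_sub hβ
    · rw [hβt]; exact evenKernel_half_lt_of_two_le hα2 ht ht'
    · rw [hβt, evenKernel_neg]; exact evenKernel_half_lt_of_two_le hα2 ht ht'

end TranslatedTheta

/-- For every `α > 0`, the translated theta function `β ↦ θ_{ℤ+β}(α)` attains its
minimum exactly at the points congruent to `1/2` modulo `1`:
`θ_{ℤ+1/2}(α) ≤ θ_{ℤ+β}(α)`, with equality iff `β − 1/2 ∈ ℤ`. -/
theorem theta_Z_min_at_half (α β : ℝ) (hα : 0 < α) :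
    (∑' n : ℤ, Real.exp (-π * α * ((n : ℝ) + 1 / 2) ^ 2)) ≤
      (∑' n : ℤ, Real.exp (-π * α * ((n : ℝ) + β) ^ 2)) ∧
    ((∑' n : ℤ, Real.exp (-π * α * ((n : ℝ) + 1 / 2) ^ 2)) =
        (∑' n : ℤ, Real.exp (-π * α * ((n : ℝ) + β) ^ 2)) ↔
      ∃ k : ℤ, β - 1 / 2 = (k : ℝ)) := by
  have htheta (b : ℝ) : ∑' n : ℤ, exp (-π * α * ((n : ℝ) + b) ^ 2) = evenKernel b α :=
    ((hasSum_int_evenKernel b hα).congr_fun fun n => by ring_nf).tsum_eq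
  rw [htheta, htheta, ← TranslatedTheta.coe_eq_coe_iff_exists_int]
  by_cases hβ : (β : UnitAddCircle) = ↑(1 / 2 : ℝ)
  · simp [hβ]
  · have hlt := TranslatedTheta.evenKernel_half_lt hα hβ
    exact ⟨hlt.le, iff_of_false hlt.ne hβ⟩
end

section
/- Let d ≥ 1 and a₁, …, a_d > 0, and let X = ⊕_{i=1}^d ℤ(aᵢeᵢ) be the orthorhombic lattice, so that θ_{X+z}(α) = ∑_{m∈ℤ^d} exp(−πα ∑_{i=1}^d (aᵢmᵢ + zᵢ)²). Let z* = (a₁/2, …, a_d/2) be the center of the primitive cell. Then for every α > 0 and every z ∈ ℝ^d, θ_{X+z*}(α) ≤ θ_{X+z}(α), and equality holds if and only if zᵢ − aᵢ/2 ∈ aᵢℤ for every i ∈ {1, …, d}. -/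
/-!
In one dimension write `G_c(t) = shiftedTheta c t = ∑ₙ exp(-c (n + t)²)`. The lattice theta
function is the product `∏ᵢ G_{πα aᵢ²}(zᵢ / aᵢ)`, so it suffices to show that `G_c` attains
its minimum exactly on `1/2 + ℤ`.

Splitting `ℤ²` into the two cosets of `{(j + k, j - k)}`, and `ℤ` into even and odd
integers, gives `G_c(x)² = G_{2c}(x) G_{2c}(0) + G_{2c}(x + 1/2) G_{2c}(1/2)` and
`G_{2c}(x) G_{2c}(x + 1/2) = G_{4c}(1/4) G_c(2x + 1/2)`, which AM-GM turns into
`G_c(1/2)³ G_c(2x + 1/2) ≤ G_c(x)⁴`. Hence `φ(u) = log G_c(1/2 + u) - log G_c(1/2)`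
satisfies `φ(2u) ≤ 4 φ(u)`, and being bounded below, `φ` is nonnegative. Equality at `c`
forces equality in AM-GM and hence equality at `2c`, so at every `2ᵏc`; off `1/2 + ℤ` this
contradicts `G_C(x) ≥ exp(-C dist(x, ℤ)²)` and `G_C(1/2) = O(exp(-C/4))`.
-/

open Real

theorem HasSum.add_of_range_eq_compl {α β γ M : Type*} [AddCommMonoid M] [TopologicalSpace M]
    [ContinuousAdd M] {f : γ → M} {g : α → γ} {h : β → γ} {a b : M} (hg : g.Injective)
    (hh : h.Injective) (hc : Set.range h = (Set.range g)ᶜ) (ha : HasSum (f ∘ g) a)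
    (hb : HasSum (f ∘ h) b) : HasSum f (a + b) :=
  (hg.hasSum_range_iff.2 ha).add_isCompl (hc ▸ isCompl_compl) (hh.hasSum_range_iff.2 hb)

section
variable {M : Type*} [AddCommMonoid M] [TopologicalSpace M] [ContinuousAdd M] {a b : M}

theorem HasSum.int_even_add_odd {f : ℤ → M} (ha : HasSum (fun k => f (2 * k)) a)
    (hb : HasSum (fun k => f (2 * k + 1)) b) : HasSum f (a + b) := by
  refine HasSum.add_of_range_eq_compl (g := fun k : ℤ => 2 * k) (h := fun k : ℤ => 2 * k + 1)
    (fun _ _ h => by simp only at h; omega) (fun _ _ h => by simp only at h; omega) ?_ ha hb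
  ext n
  simp only [Set.mem_range, Set.mem_compl_iff, not_exists]
  constructor
  · rintro ⟨k, rfl⟩ j
    omega
  · intro h
    obtain ⟨k, rfl | rfl⟩ := Int.even_or_odd' n
    exacts [absurd rfl (h k), ⟨k, rfl⟩]

theorem HasSum.int_prod_add_sub {f : ℤ × ℤ → M}
    (ha : HasSum (fun q : ℤ × ℤ => f (q.1 + q.2, q.1 - q.2)) a)
    (hb : HasSum (fun q : ℤ × ℤ => f (q.1 + q.2 + 1, q.1 - q.2)) b) : HasSum f (a + b) := by
  refine HasSum.add_of_range_eq_compl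
    (fun _ _ h => by simp only [Prod.ext_iff] at h ⊢; omega)
    (fun _ _ h => by simp only [Prod.ext_iff] at h ⊢; omega) ?_ ha hb
  ext ⟨m, n⟩
  simp only [Set.mem_range, Set.mem_compl_iff, not_exists, Prod.ext_iff, Prod.exists]
  constructor
  · rintro ⟨j, k, h₁, h₂⟩ j' k' ⟨h₁', h₂'⟩
    omega
  · intro h
    obtain ⟨s, hs | hs⟩ := Int.even_or_odd' (m + n)
    · exact absurd ⟨by omega, by omega⟩ (h s (m - s))
    · exact ⟨s, m - 1 - s, by omega, by omega⟩

end

theorem hasSum_pi_prod_of_nonneg {κ : Type*} {d : ℕ} {f : Fin d → κ → ℝ} {s : Fin d → ℝ}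
    (hf : ∀ i, HasSum (f i) (s i)) (h0 : ∀ i n, 0 ≤ f i n) :
    HasSum (fun m : Fin d → κ => ∏ i, f i (m i)) (∏ i, s i) := by
  induction d with
  | zero => simp
  | succ d ih =>
    have ih : HasSum (fun m : Fin d → κ => ∏ i : Fin d, f i.succ (m i))
        (∏ i : Fin d, s i.succ) := ih (fun i => hf i.succ) (fun i => h0 i.succ)
    have hg : 0 ≤ fun m : Fin d → κ => ∏ i : Fin d, f i.succ (m i) :=
      fun m => Finset.prod_nonneg fun i _ => h0 i.succ (m i)
    have hf0 : 0 ≤ f 0 := h0 0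
    have hsum := (hf 0).summable.mul_of_nonneg ih.summable hf0 hg
    have hprod := (hf 0).mul ih hsum
    have hcons : (fun m => ∏ i, f i (m i)) ∘ Fin.consEquiv (fun _ => κ) =
        fun p => f 0 p.1 * ∏ i : Fin d, f i.succ (p.2 i) := by
      ext p
      simp [Fin.prod_univ_succ]
    rw [Fin.prod_univ_succ]
    exact (Fin.consEquiv _).hasSum_iff.1 (hcons ▸ hprod)

theorem Finset.prod_eq_prod_iff_of_pos_of_le {ι : Type*} {s : Finset ι} {f g : ι → ℝ}
    (hf : ∀ i ∈ s, 0 < f i) (hfg : ∀ i ∈ s, f i ≤ g i) :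
    ∏ i ∈ s, f i = ∏ i ∈ s, g i ↔ ∀ i ∈ s, f i = g i := by
  refine ⟨fun h => ?_, Finset.prod_congr rfl⟩
  by_contra! hne
  obtain ⟨i, hi, hfi⟩ := hne
  exact (Finset.prod_lt_prod hf hfg ⟨i, hi, (hfg i hi).lt_of_ne hfi⟩).ne h

theorem nonpos_of_forall_pow_mul_le {L δ K : ℝ} (hL : 1 < L) (h : ∀ k : ℕ, L ^ k * δ ≤ K) :
    δ ≤ 0 := by
  by_contra! hδ
  obtain ⟨k, hk⟩ := pow_unbounded_of_one_lt (K / δ) hL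
  linarith [h k, (div_lt_iff₀ hδ).1 hk]

theorem nonneg_of_le_mul_comp_of_bddBelow {X : Type*} {f : X → ℝ} {T : X → X} {L : ℝ}
    (hL : 1 < L) (hT : ∀ x, f (T x) ≤ L * f x) (hf : BddBelow (Set.range f)) (x : X) :
    0 ≤ f x := by
  obtain ⟨b, hb⟩ := hf
  have hiter : ∀ k : ℕ, f (T^[k] x) ≤ L ^ k * f x := by
    intro k
    induction k with
    | zero => simp
    | succ k ih =>
      rw [Function.iterate_succ_apply', pow_succ, mul_comm _ L, mul_assoc]
      exact (hT _).trans (mul_le_mul_of_nonneg_left ih (by linarith))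
  have := nonpos_of_forall_pow_mul_le hL fun k =>
    show L ^ k * -f x ≤ -b by linarith [hb ⟨T^[k] x, rfl⟩, hiter k]
  linarith

noncomputable def shiftedTheta (c t : ℝ) : ℝ := ∑' n : ℤ, rexp (-c * (n + t) ^ 2)

section shiftedTheta

variable {c : ℝ}

theorem summable_shiftedTheta (hc : 0 < c) (t : ℝ) :
    Summable fun n : ℤ => rexp (-c * (n + t) ^ 2) := by
  refine (HurwitzKernelBounds.summable_f_int 0 t (div_pos hc pi_pos)).congr fun n => ?_
  rw [HurwitzKernelBounds.f_int, pow_zero, one_mul]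
  congr 1
  field_simp

theorem hasSum_shiftedTheta (hc : 0 < c) (t : ℝ) :
    HasSum (fun n : ℤ => rexp (-c * (n + t) ^ 2)) (shiftedTheta c t) :=
  (summable_shiftedTheta hc t).hasSum

theorem shiftedTheta_pos (hc : 0 < c) (t : ℝ) : 0 < shiftedTheta c t :=
  (summable_shiftedTheta hc t).tsum_pos (fun _ => (exp_pos _).le) 0 (exp_pos _)

theorem shiftedTheta_add_int (t : ℝ) (k : ℤ) : shiftedTheta c (t + k) = shiftedTheta c t := by
  rw [shiftedTheta, shiftedTheta, ← (Equiv.subRight k).tsum_eq]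
  refine tsum_congr fun n => ?_
  simp only [Equiv.subRight_apply, Int.cast_sub]
  ring_nf

theorem shiftedTheta_add_one (t : ℝ) : shiftedTheta c (t + 1) = shiftedTheta c t := by
  exact_mod_cast shiftedTheta_add_int t 1

theorem shiftedTheta_neg (t : ℝ) : shiftedTheta c (-t) = shiftedTheta c t := by
  rw [shiftedTheta, ← (Equiv.neg ℤ).tsum_eq]
  refine tsum_congr fun n => ?_
  simp only [Equiv.neg_apply, Int.cast_neg]
  congr 1
  ring

theorem exp_neg_mul_sq_sub_round_le_shiftedTheta (hc : 0 < c) (t : ℝ) :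
    rexp (-c * (t - round t) ^ 2) ≤ shiftedTheta c t := by
  have h := (summable_shiftedTheta hc t).le_tsum (-round t) fun _ _ => (exp_pos _).le
  rwa [Int.cast_neg, neg_add_eq_sub] at h

theorem shiftedTheta_half_le_exp_mul (hc : 0 < c) {C : ℝ} (hcC : c ≤ C) :
    shiftedTheta C (1 / 2) ≤ rexp (-(C - c) / 4) * shiftedTheta c (1 / 2) := by
  rw [shiftedTheta, shiftedTheta, ← tsum_mul_left]
  refine (summable_shiftedTheta (hc.trans_le hcC) _).tsum_le_tsum (fun n => ?_)
    ((summable_shiftedTheta hc _).mul_left _)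
  rw [← exp_add, exp_le_exp]
  have hn : (0 : ℝ) ≤ n * (n + 1) := by
    exact_mod_cast (show (0 : ℤ) ≤ n * (n + 1) by rcases le_or_gt 0 n with h | h <;> nlinarith)
  nlinarith [mul_nonneg (sub_nonneg.2 hcC) hn]

theorem shiftedTheta_add_shiftedTheta_add_half (hc : 0 < c) (w : ℝ) :
    shiftedTheta (4 * c) w + shiftedTheta (4 * c) (w + 1 / 2) = shiftedTheta c (2 * w) := by
  have h4c : 0 < 4 * c := by positivity
  refine (HasSum.int_even_add_odd (f := fun n : ℤ => rexp (-c * (n + 2 * w) ^ 2)) ?_ ?_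
    ).tsum_eq.symm
  · refine (hasSum_shiftedTheta h4c w).congr_fun fun k => ?_
    push_cast
    ring_nf
  · refine (hasSum_shiftedTheta h4c (w + 1 / 2)).congr_fun fun k => ?_
    push_cast
    ring_nf

theorem hasSum_shiftedTheta_mul (hc : 0 < c) (x y : ℝ) :
    HasSum (fun q : ℤ × ℤ => rexp (-c * (q.1 + x) ^ 2) * rexp (-c * (q.2 + y) ^ 2))
      (shiftedTheta c x * shiftedTheta c y) :=
  (hasSum_shiftedTheta hc x).mul (hasSum_shiftedTheta hc y) <|
    (summable_shiftedTheta hc x).mul_of_nonneg (summable_shiftedTheta hc y)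
      (fun _ => (exp_pos _).le) fun _ => (exp_pos _).le

theorem shiftedTheta_mul_shiftedTheta (hc : 0 < c) (x y : ℝ) :
    shiftedTheta c x * shiftedTheta c y =
      shiftedTheta (2 * c) ((x + y) / 2) * shiftedTheta (2 * c) ((x - y) / 2) +
        shiftedTheta (2 * c) ((x + y) / 2 + 1 / 2) *
          shiftedTheta (2 * c) ((x - y) / 2 + 1 / 2) := by
  have h2c : 0 < 2 * c := by positivity
  refine (hasSum_shiftedTheta_mul hc x y).unique (HasSum.int_prod_add_sub ?_ ?_)
  · refine (hasSum_shiftedTheta_mul h2c _ _).congr_fun fun q => ?_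
    rw [← exp_add, ← exp_add]
    push_cast
    ring_nf
  · refine (hasSum_shiftedTheta_mul h2c _ _).congr_fun fun q => ?_
    rw [← exp_add, ← exp_add]
    push_cast
    ring_nf

theorem shiftedTheta_sq (hc : 0 < c) (x : ℝ) :
    shiftedTheta c x ^ 2 = shiftedTheta (2 * c) x * shiftedTheta (2 * c) 0 +
      shiftedTheta (2 * c) (x + 1 / 2) * shiftedTheta (2 * c) (1 / 2) := by
  rw [sq, shiftedTheta_mul_shiftedTheta hc]
  ring_nf

theorem shiftedTheta_mul_shiftedTheta_add_half (hc : 0 < c) (x : ℝ) :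
    shiftedTheta (2 * c) x * shiftedTheta (2 * c) (x + 1 / 2) =
      shiftedTheta (4 * c) (1 / 4) * shiftedTheta c (2 * x + 1 / 2) := by
  rw [shiftedTheta_mul_shiftedTheta (by positivity),
    show (x - (x + 1 / 2)) / 2 = -(1 / 4) by ring, shiftedTheta_neg,
    show 2 * x + 1 / 2 = 2 * (x + 1 / 4) by ring,
    ← shiftedTheta_add_shiftedTheta_add_half hc, show 2 * (2 * c) = 4 * c by ring]
  ring_nf

theorem shiftedTheta_zero_mul_shiftedTheta_half (hc : 0 < c) :
    shiftedTheta (2 * c) 0 * shiftedTheta (2 * c) (1 / 2) =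
      shiftedTheta (4 * c) (1 / 4) * shiftedTheta c (1 / 2) := by
  simpa using shiftedTheta_mul_shiftedTheta_add_half hc 0

theorem shiftedTheta_half_eq (hc : 0 < c) :
    shiftedTheta c (1 / 2) = 2 * shiftedTheta (4 * c) (1 / 4) := by
  have h := shiftedTheta_sq hc (1 / 2)
  rw [show (1 : ℝ) / 2 + 1 / 2 = 0 + 1 by norm_num, shiftedTheta_add_one,
    mul_comm (shiftedTheta (2 * c) (1 / 2)), shiftedTheta_zero_mul_shiftedTheta_half hc] at h
  refine mul_right_cancel₀ (shiftedTheta_pos hc (1 / 2)).ne' ?_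
  rw [← sq, h]
  ring

theorem shiftedTheta_half_pow_three_mul_le (hc : 0 < c) (x : ℝ) :
    shiftedTheta c (1 / 2) ^ 3 * shiftedTheta c (2 * x + 1 / 2) ≤ shiftedTheta c x ^ 4 := by
  set p := shiftedTheta (2 * c) x
  set q := shiftedTheta (2 * c) 0
  set r := shiftedTheta (2 * c) (x + 1 / 2)
  set s := shiftedTheta (2 * c) (1 / 2)
  calc shiftedTheta c (1 / 2) ^ 3 * shiftedTheta c (2 * x + 1 / 2)
        = 4 * (p * r) * (q * s) := by
        rw [shiftedTheta_mul_shiftedTheta_add_half hc, shiftedTheta_zero_mul_shiftedTheta_half hc,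
          shiftedTheta_half_eq hc]
        ring
    _ ≤ (p * q + r * s) ^ 2 := by nlinarith [sq_nonneg (p * q - r * s)]
    _ = shiftedTheta c x ^ 4 := by rw [← shiftedTheta_sq hc]; ring

theorem shiftedTheta_half_le (hc : 0 < c) (t : ℝ) :
    shiftedTheta c (1 / 2) ≤ shiftedTheta c t := by
  have hpos := shiftedTheta_pos hc
  set φ : ℝ → ℝ := fun u => log (shiftedTheta c (1 / 2 + u)) - log (shiftedTheta c (1 / 2))
  have hstep : ∀ u, φ (2 * u) ≤ 4 * φ u := by
    intro u
    have h := shiftedTheta_half_pow_three_mul_le hc (1 / 2 + u)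
    rw [show 2 * (1 / 2 + u) + 1 / 2 = 1 / 2 + 2 * u + 1 by ring, shiftedTheta_add_one] at h
    have h := log_le_log (mul_pos (pow_pos (hpos _) 3) (hpos _)) h
    rw [log_mul (pow_pos (hpos _) 3).ne' (hpos _).ne', log_pow, log_pow] at h
    push_cast at h
    simp only [φ]
    linarith
  have hbdd : BddBelow (Set.range φ) := by
    refine ⟨-c / 4 - log (shiftedTheta c (1 / 2)), ?_⟩
    rintro _ ⟨u, rfl⟩
    have hround : (1 / 2 + u - round (1 / 2 + u)) ^ 2 ≤ 1 / 4 := by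
      nlinarith [abs_sub_round (1 / 2 + u), abs_nonneg (1 / 2 + u - round (1 / 2 + u)),
        sq_abs (1 / 2 + u - round (1 / 2 + u))]
    have h := (exp_le_exp.2 (show -c / 4 ≤ -c * (1 / 2 + u - round (1 / 2 + u)) ^ 2 by
      nlinarith)).trans (exp_neg_mul_sq_sub_round_le_shiftedTheta hc _)
    have h := log_le_log (exp_pos (-c / 4)) h
    rw [log_exp] at h
    simp only [φ]
    linarith
  have h := nonneg_of_le_mul_comp_of_bddBelow (by norm_num) hstep hbdd (t - 1 / 2)
  simp only [φ, add_sub_cancel, sub_nonneg] at h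
  exact (log_le_log_iff (hpos _) (hpos _)).1 h

theorem shiftedTheta_two_mul_eq_of_eq (hc : 0 < c) {x : ℝ}
    (h : shiftedTheta c x = shiftedTheta c (1 / 2)) :
    shiftedTheta (2 * c) x = shiftedTheta (2 * c) (1 / 2) := by
  set p := shiftedTheta (2 * c) x
  set q := shiftedTheta (2 * c) 0
  set r := shiftedTheta (2 * c) (x + 1 / 2)
  set s := shiftedTheta (2 * c) (1 / 2)
  set g := shiftedTheta (4 * c) (1 / 4)
  have hq : 0 < q := shiftedTheta_pos (by positivity) 0
  have hqs : q * s = g * shiftedTheta c (1 / 2) := shiftedTheta_zero_mul_shiftedTheta_half hc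
  have hsum : p * q + r * s = 2 * (q * s) := by
    rw [← shiftedTheta_sq hc, h, hqs, shiftedTheta_half_eq hc]
    ring
  have hprod : q * s ≤ p * r := by
    rw [shiftedTheta_mul_shiftedTheta_add_half hc, hqs]
    exact mul_le_mul_of_nonneg_left (shiftedTheta_half_le hc _)
      (shiftedTheta_pos (by positivity) _).le
  have hqs₀ : 0 ≤ q * s := mul_nonneg hq.le (shiftedTheta_pos (by positivity) _).le
  have hsq : (p * q - r * s) ^ 2 ≤ 0 := by
    rw [show (p * q - r * s) ^ 2 = (p * q + r * s) ^ 2 - 4 * (p * r) * (q * s) by ring, hsum]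
    nlinarith [mul_le_mul_of_nonneg_left hprod hqs₀]
  have hpq : p * q = r * s := by nlinarith [sq_nonneg (p * q - r * s)]
  exact mul_right_cancel₀ hq.ne' (by linarith)

theorem shiftedTheta_eq_half_iff (hc : 0 < c) {x : ℝ} :
    shiftedTheta c x = shiftedTheta c (1 / 2) ↔ ∃ n : ℤ, x - 1 / 2 = n := by
  refine ⟨fun h => ?_, fun ⟨n, hn⟩ => by rw [sub_eq_iff_eq_add'.1 hn, shiftedTheta_add_int]⟩
  by_contra hx
  set e := x - round x
  have he : e ^ 2 < 1 / 4 := by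
    rcases (abs_sub_round x).lt_or_eq with hlt | heq
    · nlinarith [abs_nonneg e, sq_abs e]
    · rcases (abs_eq (by norm_num)).1 heq with he | he
      · exact absurd ⟨round x, by linarith⟩ hx
      · exact absurd ⟨round x - 1, by push_cast; linarith⟩ hx
  have hiter : ∀ k : ℕ, shiftedTheta (2 ^ k * c) x = shiftedTheta (2 ^ k * c) (1 / 2) := by
    intro k
    induction k with
    | zero => simpa using h
    | succ k ih =>
      rw [pow_succ, mul_comm _ (2 : ℝ), mul_assoc]
      exact shiftedTheta_two_mul_eq_of_eq (by positivity) ih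
  have hbound : ∀ k : ℕ,
      (2 : ℝ) ^ k * (c * (1 / 4 - e ^ 2)) ≤ c / 4 + log (shiftedTheta c (1 / 2)) := by
    intro k
    have hcC : c ≤ 2 ^ k * c := le_mul_of_one_le_left hc.le (one_le_pow₀ one_le_two)
    have h := ((exp_neg_mul_sq_sub_round_le_shiftedTheta (hc.trans_le hcC) x).trans_eq
      (hiter k)).trans (shiftedTheta_half_le_exp_mul hc hcC)
    have h := log_le_log (exp_pos _) h
    rw [log_exp, log_mul (exp_pos _).ne' (shiftedTheta_pos hc _).ne', log_exp] at h
    linarith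
  have := nonpos_of_forall_pow_mul_le one_lt_two hbound
  nlinarith

end shiftedTheta

theorem tsum_exp_neg_sum_sq_eq_prod_shiftedTheta {d : ℕ} {a : Fin d → ℝ} (ha : ∀ i, a i ≠ 0)
    {α : ℝ} (hα : 0 < α) (z : Fin d → ℝ) :
    ∑' m : Fin d → ℤ, rexp (-π * α * ∑ i, (a i * m i + z i) ^ 2) =
      ∏ i, shiftedTheta (π * α * a i ^ 2) (z i / a i) := by
  refine HasSum.tsum_eq ?_
  convert hasSum_pi_prod_of_nonneg (fun i => hasSum_shiftedTheta (c := π * α * a i ^ 2)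
    (by have := ha i; positivity) (z i / a i)) (fun _ _ => (exp_pos _).le) using 2 with m
  rw [← exp_sum, Finset.mul_sum]
  refine congrArg rexp (Finset.sum_congr rfl fun i _ => ?_)
  field_simp [ha i]

theorem theta_orthorhombic_min_at_center_general (d : ℕ)
    (a : Fin d → ℝ) (ha : ∀ i, 0 < a i) (α : ℝ) (hα : 0 < α) (z : Fin d → ℝ) :
    (∑' m : Fin d → ℤ, Real.exp (-π * α * ∑ i, (a i * (m i : ℝ) + a i / 2) ^ 2)) ≤
      (∑' m : Fin d → ℤ, Real.exp (-π * α * ∑ i, (a i * (m i : ℝ) + z i) ^ 2)) ∧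
    ((∑' m : Fin d → ℤ, Real.exp (-π * α * ∑ i, (a i * (m i : ℝ) + a i / 2) ^ 2)) =
        (∑' m : Fin d → ℤ, Real.exp (-π * α * ∑ i, (a i * (m i : ℝ) + z i) ^ 2)) ↔
      ∀ i, ∃ n : ℤ, z i - a i / 2 = a i * (n : ℝ)) := by
  have hc i : 0 < π * α * a i ^ 2 := by have := ha i; positivity
  have hcenter i : a i / 2 / a i = 1 / 2 := by field_simp [(ha i).ne']
  have hshift i (n : ℤ) : z i / a i - 1 / 2 = n ↔ z i - a i / 2 = a i * n := by
    rw [div_sub' (ha i).ne', div_eq_iff (ha i).ne']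
    constructor <;> intro h <;> linarith
  simp only [tsum_exp_neg_sum_sq_eq_prod_shiftedTheta (fun i => (ha i).ne') hα, hcenter]
  have hle i : shiftedTheta (π * α * a i ^ 2) (1 / 2) ≤
      shiftedTheta (π * α * a i ^ 2) (z i / a i) := shiftedTheta_half_le (hc i) _
  refine ⟨Finset.prod_le_prod (fun i _ => (shiftedTheta_pos (hc i) _).le) fun i _ => hle i, ?_⟩
  rw [Finset.prod_eq_prod_iff_of_pos_of_le (fun i _ => shiftedTheta_pos (hc i) _) fun i _ => hle i]
  simp only [Finset.mem_univ, forall_const, eq_comm (a := shiftedTheta _ (1 / 2)),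
    shiftedTheta_eq_half_iff (hc _), hshift]

/-- For the orthorhombic lattice `X = ⊕ᵢ ℤ(aᵢeᵢ)`, the center `z* = (a₁/2,…,a_d/2)`
of the primitive cell minimizes `z ↦ θ_{X+z}(α)` for every `α > 0`, with equality
iff `zᵢ − aᵢ/2 ∈ aᵢℤ` for every `i`. -/
theorem theta_orthorhombic_min_at_center (d : ℕ) (hd : 1 ≤ d)
    (a : Fin d → ℝ) (ha : ∀ i, 0 < a i) (α : ℝ) (hα : 0 < α) (z : Fin d → ℝ) :
    (∑' m : Fin d → ℤ, Real.exp (-π * α * ∑ i, (a i * (m i : ℝ) + a i / 2) ^ 2)) ≤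
      (∑' m : Fin d → ℤ, Real.exp (-π * α * ∑ i, (a i * (m i : ℝ) + z i) ^ 2)) ∧
    ((∑' m : Fin d → ℤ, Real.exp (-π * α * ∑ i, (a i * (m i : ℝ) + a i / 2) ^ 2)) =
        (∑' m : Fin d → ℤ, Real.exp (-π * α * ∑ i, (a i * (m i : ℝ) + z i) ^ 2)) ↔
      ∀ i, ∃ n : ℤ, z i - a i / 2 = a i * (n : ℝ)) :=
  theta_orthorhombic_min_at_center_general d a ha α hα z
end
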